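/- arXiv:1506.00111 — 4 statements merged into one kernel-verified Lean document; each statement's English description precedes it below -/
import Mathlib

section
/- Let V : ℝⁿ → ℝ be continuously differentiable, let m₁, …, mₙ > 0, and define the approximate action S̄(x,x',t) = Σ_{j=1}^{n} mⱼ·(xⱼ − x'ⱼ)²/(2t) − V̄(x,x')·t for t ≠ 0, where V̄(x,x') = ∫₀¹ V(τx + (1−τ)x') dτ. Then S̄ satisfies the Hamilton–Jacobi equation exactly up to a term quadratic in t: for all x, x' ∈ ℝⁿ and t ≠ 0, ∂S̄/∂t + Σ_{j=1}^{n} (1/(2mⱼ))·(∂S̄/∂xⱼ)² + V(x) = t² · Σ_{j=1}^{n} (1/(2mⱼ))·(∂V̄/∂xⱼ(x,x'))². In particular the left-hand side is O(t²) as t → 0 for fixed x, x'. -/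
/-!
Differentiating under the integral sign gives `∇ₓV̄(x, x') = ∫₀¹ τ ∇V(τx + (1 - τ)x') dτ`, and an
integration by parts in `τ` turns this into the identity `(x - x') · ∇ₓV̄ = V(x) - V̄(x, x')`.
Since `∂ⱼS̄ = mⱼ(xⱼ - x'ⱼ)/t - t ∂ⱼV̄`, expanding the squares in the Hamiltonian produces
`Σⱼ mⱼ(xⱼ - x'ⱼ)²/(2t²)`, which cancels against `∂ₜS̄`, and the cross term `-(x - x') · ∇ₓV̄`,
which by that identity cancels `V(x) - V̄`; only `t² Σⱼ (∂ⱼV̄)²/(2mⱼ)` survives.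
-/

open MeasureTheory

section SegmentAverage

variable {E F : Type*} [NormedAddCommGroup E] [NormedSpace ℝ E]
  [NormedAddCommGroup F] [NormedSpace ℝ F] {V : E → F}

noncomputable def segmentAverage (V : E → F) (x x' : E) : F :=
  ∫ τ in (0:ℝ)..1, V (τ • x + (1 - τ) • x')

theorem hasFDerivAt_segmentAverage [ProperSpace E] (hV : ContDiff ℝ 1 V) (x x' : E) :
    HasFDerivAt (segmentAverage V · x')
      (∫ τ in (0:ℝ)..1, τ • fderiv ℝ V (τ • x + (1 - τ) • x')) x := by
  set c : ℝ × E → E := fun p => p.1 • p.2 + (1 - p.1) • x'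
  have hc : ∀ y, Continuous fun τ => c (τ, y) := fun y => by fun_prop
  have hV' : Continuous (fderiv ℝ V) := hV.continuous_fderiv one_ne_zero
  obtain ⟨C, hC⟩ : ∃ C, ∀ z ∈ c '' (Set.Icc 0 1 ×ˢ Metric.closedBall x 1), ‖fderiv ℝ V z‖ ≤ C :=
    ((isCompact_Icc.prod (isCompact_closedBall x 1)).image (by fun_prop))
      |>.exists_bound_of_continuousOn hV'.continuousOn
  have hderiv : ∀ (τ : ℝ) (y : E),
      HasFDerivAt (fun z => V (c (τ, z))) (τ • fderiv ℝ V (c (τ, y))) y :=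
    fun τ y => (((hV.differentiable one_ne_zero _).hasFDerivAt).comp y
      (((hasFDerivAt_id y).const_smul τ).add_const ((1 - τ) • x'))).congr_fderiv (by simp [c])
  refine intervalIntegral.hasFDerivAt_integral_of_dominated_of_fderiv_le
    (F := fun y τ => V (c (τ, y))) (F' := fun y τ => τ • fderiv ℝ V (c (τ, y)))
    (bound := fun _ => C) (Metric.ball_mem_nhds x one_pos) ?_ ?_ ?_ ?_ intervalIntegrable_const ?_
  · exact .of_forall fun y => (hV.continuous.comp (hc y)).aestronglyMeasurable
  · exact (hV.continuous.comp (hc x)).intervalIntegrable 0 1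
  · exact (continuous_id.smul (hV'.comp (hc x))).aestronglyMeasurable
  · refine .of_forall fun τ hτ y hy => ?_
    rw [Set.uIoc_of_le zero_le_one] at hτ
    have hz : c (τ, y) ∈ c '' (Set.Icc 0 1 ×ˢ Metric.closedBall x 1) :=
      ⟨(τ, y), ⟨Set.Ioc_subset_Icc_self hτ, Metric.ball_subset_closedBall hy⟩, rfl⟩
    calc ‖τ • fderiv ℝ V (c (τ, y))‖ = |τ| * ‖fderiv ℝ V (c (τ, y))‖ := norm_smul _ _
      _ ≤ 1 * C :=
        mul_le_mul (abs_le.2 ⟨by linarith [hτ.1], hτ.2⟩) (hC _ hz) (norm_nonneg _) zero_le_one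
      _ = C := one_mul C
  · exact .of_forall fun τ _ y _ => hderiv τ y

theorem integral_smul_fderiv_apply_sub_eq_sub_segmentAverage [CompleteSpace F]
    (hV : ContDiff ℝ 1 V) (x x' : E) :
    (∫ τ in (0:ℝ)..1, τ • fderiv ℝ V (τ • x + (1 - τ) • x')) (x - x')
      = V x - segmentAverage V x x' := by
  set c : ℝ → E := fun τ => τ • x + (1 - τ) • x'
  have hc : Continuous c := by fun_prop
  have hV' : Continuous fun τ => fderiv ℝ V (c τ) := (hV.continuous_fderiv one_ne_zero).comp hc
  have hVc : ∀ τ, HasDerivAt (fun σ => V (c σ)) (fderiv ℝ V (c τ) (x - x')) τ := fun τ => by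
    have hc' : HasDerivAt c (x - x') τ := by
      simpa [c, sub_smul, sub_eq_add_neg] using
        ((hasDerivAt_id τ).smul_const x).fun_add (((hasDerivAt_id τ).const_sub 1).smul_const x')
    exact ((hV.differentiable one_ne_zero _).hasFDerivAt).comp_hasDerivAt τ hc'
  have hint : Continuous fun τ => τ • fderiv ℝ V (c τ) := continuous_id.smul hV'
  rw [ContinuousLinearMap.intervalIntegral_apply (hint.intervalIntegrable 0 1)]
  have := intervalIntegral.integral_smul_deriv_eq_deriv_smul (a := 0) (b := 1)
    (fun τ _ => hasDerivAt_id τ) (fun τ _ => hVc τ) intervalIntegrable_const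
    ((hV'.clm_apply continuous_const).intervalIntegrable 0 1)
  simpa [c, segmentAverage] using this

end SegmentAverage

theorem ContinuousLinearMap.apply_eq_sum_mul_apply_single {ι : Type*} [Fintype ι] [DecidableEq ι]
    (L : (ι → ℝ) →L[ℝ] ℝ) (v : ι → ℝ) : L v = ∑ j, v j * L (Pi.single j 1) := by
  conv_lhs => rw [← Finset.univ_sum_single v, map_sum]
  refine Finset.sum_congr rfl fun j _ => ?_
  rw [← smul_eq_mul, ← map_smul, ← Pi.single_smul, smul_eq_mul, mul_one]

theorem hasFDerivAt_sum_mul_sub_sq_div {ι : Type*} [Fintype ι] (a c : ι → ℝ) (b : ℝ)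
    (x : ι → ℝ) :
    HasFDerivAt (fun y : ι → ℝ => ∑ j, a j * (y j - c j) ^ 2 / b)
      (∑ j, (2 * a j * (x j - c j) / b) •
        ContinuousLinearMap.proj (R := ℝ) (φ := fun _ : ι => ℝ) j) x := by
  refine HasFDerivAt.fun_sum fun j _ => ?_
  have hj : HasFDerivAt (fun y : ι → ℝ => y j - c j) (ContinuousLinearMap.proj (R := ℝ) j) x :=
    HasFDerivAt.sub_const (c j) (hasFDerivAt_apply j x)
  refine (((hj.pow 2).const_mul (a j)).mul_const b⁻¹).congr_fderiv ?_
  ext v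
  simp
  ring

theorem hasDerivAt_div_two_mul_sub_mul (a w : ℝ) {t : ℝ} (ht : t ≠ 0) :
    HasDerivAt (fun s => a / (2 * s) - w * s) (-a / (2 * t ^ 2) - w) t := by
  have hf : (fun s => a / (2 * s) - w * s) = fun s => a / 2 * s⁻¹ - w * s := by
    funext s; ring
  rw [hf]
  refine (((hasDerivAt_inv ht).const_mul (a / 2)).fun_sub
    ((hasDerivAt_id t).const_mul w)).congr_deriv ?_
  simp; ring

theorem hamiltonJacobi_residual_of_sum_mul_eq {ι : Type*} [Fintype ι] {m d D : ι → ℝ} {t W U : ℝ}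
    (hm : ∀ j, m j ≠ 0) (ht : t ≠ 0) (h : ∑ j, d j * D j = U - W) :
    -(∑ j, m j * d j ^ 2) / (2 * t ^ 2) - W
      + ∑ j, 1 / (2 * m j) * (2 * m j * d j / (2 * t) - t * D j) ^ 2 + U
      = t ^ 2 * ∑ j, 1 / (2 * m j) * D j ^ 2 := by
  have hsq : ∀ j, 1 / (2 * m j) * (2 * m j * d j / (2 * t) - t * D j) ^ 2
      = m j * d j ^ 2 / (2 * t ^ 2) - d j * D j + t ^ 2 * (1 / (2 * m j) * D j ^ 2) := fun j => by
    field_simp [hm j]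
    ring
  simp only [hsq, Finset.sum_add_distrib, Finset.sum_sub_distrib, h, ← Finset.mul_sum,
    ← Finset.sum_div]
  ring

theorem KS_action_hamilton_jacobi (n : ℕ) (V : (Fin n → ℝ) → ℝ) (hV : ContDiff ℝ 1 V)
    (m : Fin n → ℝ) (hm : ∀ j, 0 < m j)
    (Vbar : (Fin n → ℝ) → (Fin n → ℝ) → ℝ)
    (hVbar : ∀ x x', Vbar x x' = ∫ τ in (0:ℝ)..1, V (τ • x + (1 - τ) • x'))
    (Sbar : (Fin n → ℝ) → (Fin n → ℝ) → ℝ → ℝ)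
    (hSbar : ∀ x x' t, Sbar x x' t
      = (∑ j, m j * (x j - x' j) ^ 2 / (2 * t)) - Vbar x x' * t)
    (x x' : Fin n → ℝ) (t : ℝ) (ht : t ≠ 0) :
    deriv (fun s : ℝ => Sbar x x' s) t
      + (∑ j, (1 / (2 * m j)) * (fderiv ℝ (fun y => Sbar y x' t) x (Pi.single j 1)) ^ 2)
      + V x
    = t ^ 2 * ∑ j, (1 / (2 * m j)) * (fderiv ℝ (fun y => Vbar y x') x (Pi.single j 1)) ^ 2 := by
  obtain rfl : Vbar = segmentAverage V := funext fun y => funext fun y' => hVbar y y'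
  have hL := hasFDerivAt_segmentAverage hV x x'
  set L := ∫ τ in (0:ℝ)..1, τ • fderiv ℝ V (τ • x + (1 - τ) • x')
  have hkey : ∑ j, (x j - x' j) * L (Pi.single j 1) = V x - segmentAverage V x x' := by
    rw [← integral_smul_fderiv_apply_sub_eq_sub_segmentAverage hV, L.apply_eq_sum_mul_apply_single]
    rfl
  have hSt : HasDerivAt (fun s => Sbar x x' s)
      (-(∑ j, m j * (x j - x' j) ^ 2) / (2 * t ^ 2) - segmentAverage V x x') t := by
    simp only [hSbar, ← Finset.sum_div]
    exact hasDerivAt_div_two_mul_sub_mul _ _ ht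
  have hSx : HasFDerivAt (fun y => Sbar y x' t)
      ((∑ j, (2 * m j * (x j - x' j) / (2 * t)) • ContinuousLinearMap.proj j) - t • L) x := by
    simp only [hSbar]
    exact (hasFDerivAt_sum_mul_sub_sq_div m x' (2 * t) x).sub (hL.mul_const t)
  rw [hSt.deriv, hSx.fderiv, hL.fderiv]
  simp only [sub_apply, sum_apply, smul_apply, ContinuousLinearMap.proj_apply, Pi.single_apply,
    smul_eq_mul, mul_ite, mul_one, mul_zero, Finset.sum_ite_eq', Finset.mem_univ, if_true]
  exact hamiltonJacobi_residual_of_sum_mul_eq (fun j => (hm j).ne') ht hkey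
end

section
/- Let ℏ > 0 and let m, ℓ be natural numbers. Define H̄(x,x',p) = (1/(m+1)) · Σ_{k=0}^{m} x^k · x'^(m−k) · p^ℓ. Then for every Schwartz function ψ : ℝ → ℂ and every real x, the iterated integral (1/(2πℏ)) ∫_ℝ ( ∫_ℝ exp( (i/ℏ)·p·(x − x') ) · H̄(x,x',p) · ψ(x') dx' ) dp (inner integral over x', outer over p) converges and equals (1/(m+1)) · Σ_{k=0}^{m} x^k · (−iℏ)^ℓ · (d/dx)^ℓ ( x^(m−k) · ψ(x) ). -/
/-!
Expanding `H̄`, the integrand is a sum of terms `x^k / (m+1) · p^ℓ · e^{ip(x-x')/ℏ} g(x')` with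
`g = x'^(m-k) ψ` again Schwartz. The inner integral is `e^{ipx/ℏ} 𝓕 g (p / 2πℏ)`; multiplying the
Fourier transform by `p^ℓ` turns it into `(-iℏ)^ℓ 𝓕 (g^{(ℓ)})`, and the outer integral is then
Fourier inversion for `g^{(ℓ)}` after the substitution `p = 2πℏ ξ`, which produces the factor `2πℏ`.
-/

open MeasureTheory Complex

open scoped FourierTransform Real SchwartzMap

namespace SchwartzMap

lemma smulLeftCLM_ofReal_pow_apply (n : ℕ) (ψ : 𝓢(ℝ, ℂ)) (y : ℝ) :
    smulLeftCLM ℂ (fun y : ℝ => (y : ℂ) ^ n) ψ y = (y : ℂ) ^ n * ψ y := by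
  rw [smulLeftCLM_apply_apply (by fun_prop), smul_eq_mul]

lemma coe_derivCLM_iterate {F : Type*} [NormedAddCommGroup F] [NormedSpace ℝ F]
    (n : ℕ) (f : 𝓢(ℝ, F)) : ⇑((derivCLM ℝ F)^[n] f) = iteratedDeriv n f := by
  induction n with
  | zero => rfl
  | succ n ih =>
    funext x
    rw [Function.iterate_succ_apply', derivCLM_apply, ih, iteratedDeriv_succ]

lemma fourier_iteratedDeriv {F : Type*} [NormedAddCommGroup F] [NormedSpace ℂ F] [CompleteSpace F]
    (n : ℕ) (f : 𝓢(ℝ, F)) (ξ : ℝ) :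
    𝓕 (iteratedDeriv n f) ξ = (2 * π * I * ξ) ^ n • 𝓕 (f : ℝ → F) ξ :=
  congr_fun (Real.fourier_iteratedDeriv (f.smooth ⊤)
    (fun k _ => coe_derivCLM_iterate k f ▸ ((derivCLM ℝ F)^[k] f).integrable) le_top) ξ

end SchwartzMap

lemma integrable_exp_ofReal_mul_I_mul {g : ℝ → ℂ} (hg : Integrable g) {θ : ℝ → ℝ}
    (hθ : Continuous θ) : Integrable fun y => exp (θ y * I) * g y :=
  hg.bdd_mul (c := 1) (by fun_prop : Continuous fun y => exp (θ y * I)).aestronglyMeasurable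
    (.of_forall fun y => (norm_exp_ofReal_mul_I (θ y)).le)

lemma integrable_exp_mul (ℏ p x : ℝ) {g : ℝ → ℂ} (hg : Integrable g) :
    Integrable fun x' : ℝ => exp (I / ℏ * p * (x - x')) * g x' := by
  convert integrable_exp_ofReal_mul_I_mul hg (θ := fun x' => p * (x - x') / ℏ) (by fun_prop)
    using 4
  push_cast
  ring

lemma integral_exp_mul (ℏ p x : ℝ) (g : ℝ → ℂ) :
    ∫ x' : ℝ, exp (I / ℏ * p * (x - x')) * g x'
      = exp (I * p * x / ℏ) * 𝓕 g (p / (2 * π * ℏ)) := by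
  rw [Real.fourier_real_eq_integral_exp_smul, ← integral_const_mul]
  congr 1 with x'
  rw [smul_eq_mul, ← mul_assoc, ← exp_add]
  congr 2
  push_cast
  field_simp
  ring

lemma exp_I_mul_div_eq_exp_inner (ℏ p x : ℝ) :
    exp (I * p * x / ℏ) = exp (↑(2 * π * inner ℝ (p / (2 * π * ℏ)) x) * I) := by
  congr 1
  simp only [RCLike.inner_apply, conj_trivial]
  push_cast
  field_simp

lemma integrable_exp_mul_fourier_comp_div {ℏ : ℝ} (hℏ : ℏ ≠ 0) (x : ℝ) (h : 𝓢(ℝ, ℂ)) :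
    Integrable fun p : ℝ => exp (I * p * x / ℏ) * 𝓕 ⇑h (p / (2 * π * ℏ)) := by
  simp_rw [exp_I_mul_div_eq_exp_inner ℏ]
  exact (integrable_exp_ofReal_mul_I_mul (𝓕 h).integrable (θ := fun ξ => 2 * π * inner ℝ ξ x)
    (by fun_prop)).comp_div (by positivity)

lemma integral_exp_mul_fourier_comp_div (ℏ x : ℝ) (h : 𝓢(ℝ, ℂ)) :
    ∫ p : ℝ, exp (I * p * x / ℏ) * 𝓕 ⇑h (p / (2 * π * ℏ)) = 2 * π * |ℏ| * h x := by
  have hinv : 𝓕⁻ (𝓕 ⇑h) x = h x := by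
    rw [← SchwartzMap.fourier_coe, ← SchwartzMap.fourierInv_coe,
      FourierTransform.fourierInv_fourier_eq]
  simp_rw [exp_I_mul_div_eq_exp_inner ℏ]
  rw [Measure.integral_comp_div (fun ξ => exp (↑(2 * π * inner ℝ ξ x) * I) * 𝓕 ⇑h ξ),
    ← hinv, Real.fourierInv_eq']
  simp [abs_mul, abs_of_pos Real.pi_pos]

lemma ofReal_pow_mul_fourier_comp_div {ℏ : ℝ} (hℏ : ℏ ≠ 0) (ℓ : ℕ) (g : 𝓢(ℝ, ℂ)) (p : ℝ) :
    (p : ℂ) ^ ℓ * 𝓕 ⇑g (p / (2 * π * ℏ))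
      = (-I * ℏ) ^ ℓ * 𝓕 ⇑((SchwartzMap.derivCLM ℝ ℂ)^[ℓ] g) (p / (2 * π * ℏ)) := by
  rw [SchwartzMap.coe_derivCLM_iterate, SchwartzMap.fourier_iteratedDeriv, smul_eq_mul,
    ← mul_assoc, ← mul_pow]
  have hℏ' : (ℏ : ℂ) ≠ 0 := by exact_mod_cast hℏ
  congr 2
  push_cast
  field_simp
  linear_combination (p : ℂ) * I_mul_I

lemma ofReal_pow_mul_integral_exp_mul {ℏ : ℝ} (hℏ : ℏ ≠ 0) (ℓ : ℕ) (g : 𝓢(ℝ, ℂ)) (p x : ℝ) :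
    (p : ℂ) ^ ℓ * ∫ x' : ℝ, exp (I / ℏ * p * (x - x')) * g x'
      = (-I * ℏ) ^ ℓ * (exp (I * p * x / ℏ) *
          𝓕 ⇑((SchwartzMap.derivCLM ℝ ℂ)^[ℓ] g) (p / (2 * π * ℏ))) := by
  rw [integral_exp_mul, mul_left_comm, ofReal_pow_mul_fourier_comp_div hℏ, mul_left_comm]

lemma integrable_pow_mul_integral_exp_mul {ℏ : ℝ} (hℏ : ℏ ≠ 0) (ℓ : ℕ) (g : 𝓢(ℝ, ℂ)) (x : ℝ) :
    Integrable fun p : ℝ => (p : ℂ) ^ ℓ * ∫ x' : ℝ, exp (I / ℏ * p * (x - x')) * g x' := by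
  simp_rw [ofReal_pow_mul_integral_exp_mul hℏ]
  exact (integrable_exp_mul_fourier_comp_div hℏ x _).const_mul _

lemma integral_pow_mul_integral_exp_mul {ℏ : ℝ} (hℏ : 0 < ℏ) (ℓ : ℕ) (g : 𝓢(ℝ, ℂ)) (x : ℝ) :
    (1 / (2 * π * ℏ) : ℂ) * ∫ p : ℝ, (p : ℂ) ^ ℓ * ∫ x' : ℝ, exp (I / ℏ * p * (x - x')) * g x'
      = (-I * ℏ) ^ ℓ * iteratedDeriv ℓ g x := by
  have hπ : (π : ℂ) ≠ 0 := ofReal_ne_zero.mpr Real.pi_ne_zero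
  have hℏ' : (ℏ : ℂ) ≠ 0 := ofReal_ne_zero.mpr hℏ.ne'
  simp_rw [ofReal_pow_mul_integral_exp_mul hℏ.ne']
  rw [integral_const_mul, integral_exp_mul_fourier_comp_div, abs_of_pos hℏ,
    SchwartzMap.coe_derivCLM_iterate]
  field_simp

theorem born_jordan_monomial_quantization (ℏ : ℝ) (hℏ : 0 < ℏ) (m ℓ : ℕ)
    (Hbar : ℝ → ℝ → ℝ → ℂ)
    (hHbar : ∀ x x' p, Hbar x x' p
      = (1 / ((m : ℂ) + 1)) *
        ∑ k ∈ Finset.range (m + 1), (x : ℂ) ^ k * (x' : ℂ) ^ (m - k) * (p : ℂ) ^ ℓ)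
    (ψ : SchwartzMap ℝ ℂ) (x : ℝ) :
    (∀ p : ℝ, Integrable (fun x' : ℝ =>
        Complex.exp ((Complex.I / (ℏ : ℂ)) * (p : ℂ) * ((x : ℂ) - (x' : ℂ))) * Hbar x x' p * ψ x')) ∧
    Integrable (fun p : ℝ => ∫ x' : ℝ,
        Complex.exp ((Complex.I / (ℏ : ℂ)) * (p : ℂ) * ((x : ℂ) - (x' : ℂ))) * Hbar x x' p * ψ x') ∧
    (1 / (2 * Real.pi * ℏ) : ℂ) *
        ∫ p : ℝ, ∫ x' : ℝ,
          Complex.exp ((Complex.I / (ℏ : ℂ)) * (p : ℂ) * ((x : ℂ) - (x' : ℂ))) * Hbar x x' p * ψ x'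
      = (1 / ((m : ℂ) + 1)) *
          ∑ k ∈ Finset.range (m + 1),
            (x : ℂ) ^ k * (-Complex.I * (ℏ : ℂ)) ^ ℓ *
              iteratedDeriv ℓ (fun y : ℝ => (y : ℂ) ^ (m - k) * ψ y) x := by
  set g : ℕ → 𝓢(ℝ, ℂ) := fun k => SchwartzMap.smulLeftCLM ℂ (fun y : ℝ => (y : ℂ) ^ (m - k)) ψ
  have hg : ∀ k, ⇑(g k) = fun y : ℝ => (y : ℂ) ^ (m - k) * ψ y :=
    fun k => funext (SchwartzMap.smulLeftCLM_ofReal_pow_apply (m - k) ψ)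
  have hterm : ∀ (p : ℝ) (k : ℕ), Integrable fun x' : ℝ =>
      (x : ℂ) ^ k / (m + 1) * ((p : ℂ) ^ ℓ * (exp (I / ℏ * p * (x - x')) * g k x')) :=
    fun p k => ((integrable_exp_mul ℏ p x (g k).integrable).const_mul _).const_mul _
  have hsplit : ∀ p x' : ℝ, exp (I / ℏ * p * (x - x')) * Hbar x x' p * ψ x'
      = ∑ k ∈ Finset.range (m + 1),
          x ^ k / (m + 1) * (p ^ ℓ * (exp (I / ℏ * p * (x - x')) * g k x')) := by
    intro p x'
    simp only [hHbar, hg, Finset.mul_sum, Finset.sum_mul]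
    exact Finset.sum_congr rfl fun k _ => by ring
  have hinner : ∀ p : ℝ, ∫ x' : ℝ, exp (I / ℏ * p * (x - x')) * Hbar x x' p * ψ x'
      = ∑ k ∈ Finset.range (m + 1),
          x ^ k / (m + 1) * (p ^ ℓ * ∫ x' : ℝ, exp (I / ℏ * p * (x - x')) * g k x') := by
    intro p
    simp_rw [hsplit, integral_finsetSum _ fun k _ => hterm p k, integral_const_mul]
  have houter : ∀ k : ℕ, Integrable fun p : ℝ =>
      (x : ℂ) ^ k / (m + 1) * ((p : ℂ) ^ ℓ * ∫ x' : ℝ, exp (I / ℏ * p * (x - x')) * g k x') :=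
    fun k => (integrable_pow_mul_integral_exp_mul hℏ.ne' ℓ (g k) x).const_mul _
  refine ⟨fun p => ?_, ?_, ?_⟩
  · simp_rw [hsplit]
    exact integrable_finsetSum _ fun k _ => hterm p k
  · simp_rw [hinner]
    exact integrable_finsetSum _ fun k _ => houter k
  · simp_rw [hinner]
    rw [integral_finsetSum _ fun k _ => houter k, Finset.mul_sum, Finset.mul_sum]
    refine Finset.sum_congr rfl fun k _ => ?_
    rw [integral_const_mul, mul_left_comm, integral_pow_mul_integral_exp_mul hℏ ℓ (g k) x, hg]
    ring
end

section
/- Let ℏ > 0 and let A : ℝ → ℝ be smooth with all derivatives of at most polynomial growth. Define Ā(x,x') = ∫₀¹ A(τx + (1−τ)x') dτ. Then for every Schwartz function ψ : ℝ → ℂ and every real x, the iterated integral (1/(2πℏ)) ∫_ℝ ( ∫_ℝ exp( (i/ℏ)·p·(x − x') ) · p · Ā(x,x') · ψ(x') dx' ) dp (inner integral over x', outer over p) converges and equals −(iℏ/2) · ( (A·ψ)'(x) + A(x)·ψ'(x) ). -/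
open MeasureTheory Complex FourierTransform intervalIntegral
open scoped Real ContDiff

namespace BJaux

lemma growth_norm {A : ℝ → ℝ}
    (hAgrowth : ∀ n : ℕ, ∃ C k : ℝ, ∀ y : ℝ, |iteratedDeriv n A y| ≤ C * (1 + |y|) ^ k)
    (n : ℕ) :
    ∃ C : ℝ, 0 ≤ C ∧ ∃ k : ℕ, ∀ y : ℝ, |iteratedDeriv n A y| ≤ C * (1 + |y|) ^ k := by
  obtain ⟨C, k, h⟩ := hAgrowth n
  have hC : 0 ≤ C := le_trans (abs_nonneg _) (by simpa using h 0)
  refine ⟨C, hC, ⌈max k 0⌉₊, fun y => ?_⟩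
  refine (h y).trans (mul_le_mul_of_nonneg_left ?_ hC)
  have h1 : (1 : ℝ) ≤ 1 + |y| := by linarith [abs_nonneg y]
  calc (1 + |y|) ^ k ≤ (1 + |y|) ^ ((⌈max k 0⌉₊ : ℕ) : ℝ) :=
        Real.rpow_le_rpow_of_exponent_le h1 ((le_max_left k 0).trans (Nat.le_ceil _))
    _ = (1 + |y|) ^ (⌈max k 0⌉₊ : ℕ) := Real.rpow_natCast _ _

lemma S_hasDerivAt {A : ℝ → ℝ} (hA : ContDiff ℝ ∞ A)
    (hg : ∀ n : ℕ, ∃ C : ℝ, 0 ≤ C ∧ ∃ k : ℕ, ∀ y : ℝ, |iteratedDeriv n A y| ≤ C * (1 + |y|) ^ k)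
    (x : ℝ) (n : ℕ) (y₀ : ℝ) :
    HasDerivAt (fun y => ∫ τ in (0:ℝ)..1, (1 - τ) ^ n * iteratedDeriv n A (τ * x + (1 - τ) * y))
      (∫ τ in (0:ℝ)..1, (1 - τ) ^ (n + 1) * iteratedDeriv (n + 1) A (τ * x + (1 - τ) * y₀))
      y₀ := by
  obtain ⟨C, hC, k, hk⟩ := hg (n + 1)
  have hAc : ∀ m : ℕ, Continuous (iteratedDeriv m A) := fun m =>
    hA.continuous_iteratedDeriv m (by exact_mod_cast le_top)
  have hAd : ∀ m : ℕ, Differentiable ℝ (iteratedDeriv m A) := fun m => by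
    have := (contDiff_infty.mp hA (m + 1))
    exact this.differentiable_iteratedDeriv m (by exact_mod_cast Nat.lt_succ_self m)
  have hzc : ∀ y : ℝ, Continuous fun τ : ℝ => τ * x + (1 - τ) * y := fun y => by continuity
  have key := intervalIntegral.hasDerivAt_integral_of_dominated_loc_of_deriv_le
    (μ := volume) (a := (0:ℝ)) (b := 1) (x₀ := y₀) (s := Metric.ball y₀ 1)
    (F := fun y τ => (1 - τ) ^ n * iteratedDeriv n A (τ * x + (1 - τ) * y))
    (F' := fun y τ => (1 - τ) ^ (n + 1) * iteratedDeriv (n + 1) A (τ * x + (1 - τ) * y))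
    (bound := fun _ => C * (1 + (|x| + (|y₀| + 1))) ^ k)
    (Metric.ball_mem_nhds y₀ one_pos)
    (Filter.Eventually.of_forall fun y =>
      (((continuous_const.sub continuous_id).pow n).mul
        ((hAc n).comp (hzc y))).aestronglyMeasurable)
    ((((continuous_const.sub continuous_id).pow n).mul
        ((hAc n).comp (hzc y₀))).intervalIntegrable _ _)
    ((((continuous_const.sub continuous_id).pow (n+1)).mul
        ((hAc (n+1)).comp (hzc y₀))).aestronglyMeasurable)
    ?_ (intervalIntegrable_const) ?_
  · exact key.2
  · -- bound
    refine Filter.Eventually.of_forall fun τ hτ y hy => ?_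
    rw [Set.uIoc_of_le (by norm_num : (0:ℝ) ≤ 1)] at hτ
    obtain ⟨hτ0, hτ1⟩ := hτ
    have hy' : |y| ≤ |y₀| + 1 := by
      have := Metric.mem_ball.mp hy
      rw [Real.dist_eq] at this
      have h2 := abs_sub_abs_le_abs_sub y y₀
      linarith
    have hz : |τ * x + (1 - τ) * y| ≤ |x| + (|y₀| + 1) := by
      have h1 : |τ * x + (1 - τ) * y| ≤ |τ| * |x| + |1 - τ| * |y| := by
        calc |τ * x + (1 - τ) * y| ≤ |τ * x| + |(1 - τ) * y| := abs_add_le _ _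
          _ = |τ| * |x| + |1 - τ| * |y| := by rw [abs_mul, abs_mul]
      have hτa : |τ| ≤ 1 := by rw [abs_of_pos hτ0]; exact hτ1
      have hτb : |1 - τ| ≤ 1 := by rw [_root_.abs_of_nonneg (by linarith)]; linarith
      have := abs_nonneg x
      have := abs_nonneg y
      nlinarith
    have hb1 : |1 - τ| ^ (n + 1) ≤ 1 :=
      pow_le_one₀ (abs_nonneg _) (by rw [_root_.abs_of_nonneg (by linarith)]; linarith)
    calc ‖(1 - τ) ^ (n + 1) * iteratedDeriv (n + 1) A (τ * x + (1 - τ) * y)‖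
        = |1 - τ| ^ (n + 1) * |iteratedDeriv (n + 1) A (τ * x + (1 - τ) * y)| := by
          rw [Real.norm_eq_abs, abs_mul, _root_.abs_pow]
      _ ≤ 1 * (C * (1 + (|x| + (|y₀| + 1))) ^ k) := by
          refine mul_le_mul hb1 ((hk _).trans (mul_le_mul_of_nonneg_left ?_ hC))
            (abs_nonneg _) zero_le_one
          refine pow_le_pow_left₀ (by positivity) (by linarith) k
      _ = C * (1 + (|x| + (|y₀| + 1))) ^ k := one_mul _
  · -- differentiability
    refine Filter.Eventually.of_forall fun τ hτ y hy => ?_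
    have inner : HasDerivAt (fun y : ℝ => τ * x + (1 - τ) * y) (1 - τ) y := by
      simpa using ((hasDerivAt_id y).const_mul (1 - τ)).const_add (τ * x)
    have hcomp : HasDerivAt (fun y : ℝ => iteratedDeriv n A (τ * x + (1 - τ) * y))
        (deriv (iteratedDeriv n A) (τ * x + (1 - τ) * y) * (1 - τ)) y :=
      (hAd n _).hasDerivAt.comp y inner
    have := hcomp.const_mul ((1 - τ) ^ n)
    refine this.congr_deriv ?_
    rw [iteratedDeriv_succ]
    ring
variable {A : ℝ → ℝ}

lemma iteratedDeriv_S (hA : ContDiff ℝ ∞ A)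
    (hg : ∀ n : ℕ, ∃ C : ℝ, 0 ≤ C ∧ ∃ k : ℕ, ∀ y : ℝ, |iteratedDeriv n A y| ≤ C * (1 + |y|) ^ k)
    (x : ℝ) : ∀ n : ℕ,
    iteratedDeriv n (fun y => ∫ τ in (0:ℝ)..1, A (τ * x + (1 - τ) * y)) =
      fun y => ∫ τ in (0:ℝ)..1, (1 - τ) ^ n * iteratedDeriv n A (τ * x + (1 - τ) * y)
  | 0 => by simp
  | (n+1) => by
    rw [iteratedDeriv_succ, iteratedDeriv_S hA hg x n]
    funext y
    exact (S_hasDerivAt hA hg x n y).deriv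

lemma g_temperate (hA : ContDiff ℝ ∞ A)
    (hg : ∀ n : ℕ, ∃ C : ℝ, 0 ≤ C ∧ ∃ k : ℕ, ∀ y : ℝ, |iteratedDeriv n A y| ≤ C * (1 + |y|) ^ k)
    (x : ℝ) :
    Function.HasTemperateGrowth (fun y => ∫ τ in (0:ℝ)..1, A (τ * x + (1 - τ) * y)) := by
  constructor
  · apply contDiff_of_differentiable_iteratedDeriv (n := (⊤ : ℕ∞))
    intro m _
    rw [iteratedDeriv_S hA hg x m]
    exact fun y => (S_hasDerivAt hA hg x m y).differentiableAt
  · intro m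
    obtain ⟨C, hC, k, hk⟩ := hg m
    refine ⟨k, C * (1 + |x|) ^ k, fun y => ?_⟩
    rw [norm_iteratedFDeriv_eq_norm_iteratedDeriv, iteratedDeriv_S hA hg x m]
    have h1 : ‖∫ τ in (0:ℝ)..1, (1 - τ) ^ m * iteratedDeriv m A (τ * x + (1 - τ) * y)‖ ≤
        (C * (1 + (|x| + |y|)) ^ k) * |1 - 0| := by
      refine intervalIntegral.norm_integral_le_of_norm_le_const fun τ hτ => ?_
      rw [Set.uIoc_of_le (by norm_num : (0:ℝ) ≤ 1)] at hτ
      obtain ⟨hτ0, hτ1⟩ := hτ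
      have hz : |τ * x + (1 - τ) * y| ≤ |x| + |y| := by
        have h1 : |τ * x + (1 - τ) * y| ≤ |τ| * |x| + |1 - τ| * |y| := by
          calc |τ * x + (1 - τ) * y| ≤ |τ * x| + |(1 - τ) * y| := abs_add_le _ _
            _ = |τ| * |x| + |1 - τ| * |y| := by rw [abs_mul, abs_mul]
        have hτa : |τ| ≤ 1 := by rw [_root_.abs_of_pos hτ0]; exact hτ1
        have hτb : |1 - τ| ≤ 1 := by rw [_root_.abs_of_nonneg (by linarith)]; linarith
        have := abs_nonneg x
        have := abs_nonneg y
        nlinarith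
      have hb1 : |1 - τ| ^ m ≤ 1 :=
        pow_le_one₀ (abs_nonneg _) (by rw [_root_.abs_of_nonneg (by linarith)]; linarith)
      calc ‖(1 - τ) ^ m * iteratedDeriv m A (τ * x + (1 - τ) * y)‖
          = |1 - τ| ^ m * |iteratedDeriv m A (τ * x + (1 - τ) * y)| := by
            rw [Real.norm_eq_abs, abs_mul, _root_.abs_pow]
        _ ≤ 1 * (C * (1 + (|x| + |y|)) ^ k) := by
            refine mul_le_mul hb1 ((hk _).trans (mul_le_mul_of_nonneg_left ?_ hC))
              (abs_nonneg _) zero_le_one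
            exact pow_le_pow_left₀ (by positivity) (by linarith) k
        _ = C * (1 + (|x| + |y|)) ^ k := one_mul _
    have h2 : C * (1 + (|x| + |y|)) ^ k ≤ C * (1 + |x|) ^ k * (1 + ‖y‖) ^ k := by
      rw [Real.norm_eq_abs, mul_assoc, ← mul_pow]
      refine mul_le_mul_of_nonneg_left (pow_le_pow_left₀ (by positivity) ?_ k) hC
      nlinarith [abs_nonneg x, abs_nonneg y]
    calc ‖∫ τ in (0:ℝ)..1, (1 - τ) ^ m * iteratedDeriv m A (τ * x + (1 - τ) * y)‖
        ≤ (C * (1 + (|x| + |y|)) ^ k) * |1 - 0| := h1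
      _ = C * (1 + (|x| + |y|)) ^ k := by norm_num
      _ ≤ C * (1 + |x|) ^ k * (1 + ‖y‖) ^ k := h2

end BJaux

set_option maxHeartbeats 2000000 in
open SchwartzMap in
theorem born_jordan_magnetic_cross_term (ℏ : ℝ) (hℏ : 0 < ℏ)
    (A : ℝ → ℝ) (hA : ContDiff ℝ (⊤ : ℕ∞) A)
    (hAgrowth : ∀ n : ℕ, ∃ C k : ℝ, ∀ y : ℝ, |iteratedDeriv n A y| ≤ C * (1 + |y|) ^ k)
    (Abar : ℝ → ℝ → ℝ)
    (hAbar : ∀ x x', Abar x x' = ∫ τ in (0:ℝ)..1, A (τ * x + (1 - τ) * x'))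
    (ψ : SchwartzMap ℝ ℂ) (x : ℝ) :
    (∀ p : ℝ, Integrable (fun x' : ℝ =>
        Complex.exp ((Complex.I / (ℏ : ℂ)) * (p : ℂ) * ((x : ℂ) - (x' : ℂ))) *
          (p : ℂ) * (Abar x x' : ℂ) * ψ x')) ∧
    Integrable (fun p : ℝ => ∫ x' : ℝ,
        Complex.exp ((Complex.I / (ℏ : ℂ)) * (p : ℂ) * ((x : ℂ) - (x' : ℂ))) *
          (p : ℂ) * (Abar x x' : ℂ) * ψ x') ∧
    (1 / (2 * Real.pi * ℏ) : ℂ) *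
        ∫ p : ℝ, ∫ x' : ℝ,
          Complex.exp ((Complex.I / (ℏ : ℂ)) * (p : ℂ) * ((x : ℂ) - (x' : ℂ))) *
            (p : ℂ) * (Abar x x' : ℂ) * ψ x'
      = -(Complex.I * (ℏ : ℂ) / 2) *
          (deriv (fun y : ℝ => (A y : ℂ) * ψ y) x + (A x : ℂ) * deriv (fun y : ℝ => ψ y) x) := by
  have hπ : Real.pi ≠ 0 := Real.pi_ne_zero
  have hℏ' : ℏ ≠ 0 := ne_of_gt hℏ
  set c : ℝ := 2 * Real.pi * ℏ with hcdef
  have hc0 : 0 < c := by positivity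
  have hc : c ≠ 0 := ne_of_gt hc0
  have hA' : ContDiff ℝ ∞ A := hA.of_le (by simp)
  have hgN := fun n => BJaux.growth_norm hAgrowth n
  set g : ℝ → ℝ := fun y => ∫ τ in (0:ℝ)..1, A (τ * x + (1 - τ) * y) with hgdef
  have hgA : ∀ y : ℝ, Abar x y = g y := fun y => hAbar x y
  have gT : Function.HasTemperateGrowth g := BJaux.g_temperate hA' hgN x
  set B : ℂ →L[ℝ] ℝ →L[ℝ] ℂ := (ContinuousLinearMap.lsmul ℝ ℝ : ℝ →L[ℝ] ℂ →L[ℝ] ℂ).flip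
    with hBdef
  set φ : SchwartzMap ℝ ℂ := SchwartzMap.bilinLeftCLM B gT ψ with hφdef
  have hφ : ∀ v, φ v = (g v : ℂ) * ψ v := fun v => Complex.real_smul
  set W : SchwartzMap ℝ ℂ := SchwartzMap.fourierTransformCLM ℝ φ with hWdef
  have hW : ⇑W = 𝓕 ⇑φ := SchwartzMap.fourier_coe φ
  set E1 : ℝ → ℂ := fun p => Complex.exp (((p * x / ℏ : ℝ) : ℂ) * Complex.I) with hE1def
  -- concrete formula for the Fourier transform
  have fourier_formula : ∀ (f : ℝ → ℂ) (ξ : ℝ),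
      𝓕 f ξ = ∫ v : ℝ, Complex.exp (((-2 * Real.pi * (v * ξ) : ℝ) : ℂ) * Complex.I) * f v := by
    intro f ξ
    rw [Real.fourier_eq']
    congr 1
    ext v
    simp only [smul_eq_mul, RCLike.inner_apply, conj_trivial, mul_comm ξ v]
  have fourierInv_formula : ∀ (f : ℝ → ℂ) (w : ℝ),
      𝓕⁻ f w = ∫ v : ℝ, Complex.exp (((2 * Real.pi * (v * w) : ℝ) : ℂ) * Complex.I) * f v := by
    intro f w
    rw [Real.fourierInv_eq']
    congr 1
    ext v
    simp only [smul_eq_mul, RCLike.inner_apply, conj_trivial, mul_comm w v]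
  -- rewriting the integrand
  have integrand_eq : ∀ p x' : ℝ,
      Complex.exp ((Complex.I / (ℏ : ℂ)) * (p : ℂ) * ((x : ℂ) - (x' : ℂ))) *
          (p : ℂ) * (Abar x x' : ℂ) * ψ x' =
        (E1 p * (p : ℂ)) *
          (Complex.exp (((-2 * Real.pi * (x' * (c⁻¹ * p)) : ℝ) : ℂ) * Complex.I) * φ x') := by
    intro p x'
    have hexp : (Complex.I / (ℏ : ℂ)) * (p : ℂ) * ((x : ℂ) - (x' : ℂ)) =
        ((p * x / ℏ : ℝ) : ℂ) * Complex.I + ((-2 * Real.pi * (x' * (c⁻¹ * p)) : ℝ) : ℂ) *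
          Complex.I := by
      have hℏC : (ℏ : ℂ) ≠ 0 := by exact_mod_cast hℏ'
      have hπC : ((Real.pi : ℝ) : ℂ) ≠ 0 := by exact_mod_cast hπ
      rw [hcdef]
      push_cast
      field_simp
      ring
    rw [hexp, Complex.exp_add, hφ, hgA]
    ring
  have inner_integrable : ∀ p : ℝ, Integrable (fun x' : ℝ =>
      Complex.exp ((Complex.I / (ℏ : ℂ)) * (p : ℂ) * ((x : ℂ) - (x' : ℂ))) *
        (p : ℂ) * (Abar x x' : ℂ) * ψ x') := by
    intro p
    have heq : (fun x' : ℝ =>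
        Complex.exp ((Complex.I / (ℏ : ℂ)) * (p : ℂ) * ((x : ℂ) - (x' : ℂ))) *
          (p : ℂ) * (Abar x x' : ℂ) * ψ x') =
        fun x' => (E1 p * (p : ℂ)) *
          (Complex.exp (((-2 * Real.pi * (x' * (c⁻¹ * p)) : ℝ) : ℂ) * Complex.I) * φ x') :=
      funext fun x' => integrand_eq p x'
    rw [heq]
    refine Integrable.const_mul ?_ _
    refine φ.integrable.bdd_mul (c := 1) ?_ (Filter.Eventually.of_forall fun x' => ?_)
    · refine (Complex.continuous_exp.comp ?_).aestronglyMeasurable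
      exact (Complex.continuous_ofReal.comp
        (continuous_const.mul (continuous_id.mul continuous_const))).mul continuous_const
    · rw [Complex.norm_exp_ofReal_mul_I]
  have inner_val : ∀ p : ℝ, (∫ x' : ℝ,
      Complex.exp ((Complex.I / (ℏ : ℂ)) * (p : ℂ) * ((x : ℂ) - (x' : ℂ))) *
        (p : ℂ) * (Abar x x' : ℂ) * ψ x') = E1 p * (p : ℂ) * W (c⁻¹ * p) := by
    intro p
    rw [show (fun x' : ℝ =>
        Complex.exp ((Complex.I / (ℏ : ℂ)) * (p : ℂ) * ((x : ℂ) - (x' : ℂ))) *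
          (p : ℂ) * (Abar x x' : ℂ) * ψ x') =
        fun x' => (E1 p * (p : ℂ)) *
          (Complex.exp (((-2 * Real.pi * (x' * (c⁻¹ * p)) : ℝ) : ℂ) * Complex.I) * φ x')
      from funext fun x' => integrand_eq p x']
    rw [MeasureTheory.integral_const_mul]
    have : (∫ x' : ℝ, Complex.exp (((-2 * Real.pi * (x' * (c⁻¹ * p)) : ℝ) : ℂ) * Complex.I)
        * φ x') = 𝓕 ⇑φ (c⁻¹ * p) := (fourier_formula ⇑φ (c⁻¹ * p)).symm
    rw [this, ← hW]
  have houter_eq : (fun p : ℝ => ∫ x' : ℝ,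
      Complex.exp ((Complex.I / (ℏ : ℂ)) * (p : ℂ) * ((x : ℂ) - (x' : ℂ))) *
        (p : ℂ) * (Abar x x' : ℂ) * ψ x') =
      fun p : ℝ => E1 p * (p : ℂ) * W (c⁻¹ * p) := funext inner_val
  have idT : Function.HasTemperateGrowth (fun ξ : ℝ => ξ) :=
    (ContinuousLinearMap.id ℝ ℝ).hasTemperateGrowth
  set u : SchwartzMap ℝ ℂ := SchwartzMap.bilinLeftCLM B idT W with hudef
  have hu : ∀ ξ : ℝ, u ξ = (ξ : ℂ) * W ξ := fun ξ => Complex.real_smul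
  have E1meas : AEStronglyMeasurable E1 (volume : Measure ℝ) := by
    refine (Complex.continuous_exp.comp ?_).aestronglyMeasurable
    exact (Complex.continuous_ofReal.comp
      ((continuous_id.mul continuous_const).div_const ℏ)).mul continuous_const
  have E1bdd : ∀ p : ℝ, ‖E1 p‖ ≤ 1 := fun p => by
    simp only [hE1def, Complex.norm_exp_ofReal_mul_I, le_refl]
  refine ⟨inner_integrable, ?_, ?_⟩
  · -- outer integrability
    rw [houter_eq]
    have hout2 : (fun p : ℝ => E1 p * (p : ℂ) * W (c⁻¹ * p)) =
        fun p : ℝ => E1 p * (((c : ℝ) : ℂ) * u (c⁻¹ * p)) := by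
      funext p
      rw [hu]
      have hcC : ((c : ℝ) : ℂ) ≠ 0 := by exact_mod_cast hc
      have hcc : ((c : ℝ) : ℂ) * ((c⁻¹ * p : ℝ) : ℂ) = (p : ℂ) := by
        rw [← Complex.ofReal_mul, mul_inv_cancel_left₀ hc]
      rw [← hcc]; ring
    rw [hout2]
    have h1 : Integrable (fun p : ℝ => u (c⁻¹ * p)) :=
      u.integrable.comp_mul_left' (inv_ne_zero hc)
    exact (h1.const_mul _).bdd_mul E1meas (Filter.Eventually.of_forall E1bdd)
  · -- the value
    set G : ℝ → ℂ := fun ξ => E1 (c * ξ) * ((c * ξ : ℝ) : ℂ) * W ξ with hGdef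
    have hGcomp : (fun p : ℝ => E1 p * (p : ℂ) * W (c⁻¹ * p)) =
        fun p : ℝ => G (c⁻¹ * p) := by
      funext p
      simp only [hGdef, mul_inv_cancel_left₀ hc]
    set Φd : SchwartzMap ℝ ℂ := SchwartzMap.derivCLM ℝ ℂ φ with hΦddef
    have hderiv : deriv ⇑φ = ⇑Φd := funext fun t => (SchwartzMap.derivCLM_apply ℝ φ t).symm
    have hFd : 𝓕 ⇑Φd = fun ξ : ℝ => (2 * Real.pi * Complex.I * ξ) • (𝓕 ⇑φ ξ) := by
      rw [← hderiv]
      exact Real.fourier_deriv φ.integrable φ.differentiable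
        (by rw [hderiv]; exact Φd.integrable)
    have hGval : ∀ ξ : ℝ, G ξ = (-(Complex.I) * (ℏ : ℂ)) *
        (Complex.exp (((2 * Real.pi * (ξ * x) : ℝ) : ℂ) * Complex.I) * 𝓕 ⇑Φd ξ) := by
      intro ξ
      have h1 : 𝓕 ⇑Φd ξ = (2 * (Real.pi : ℂ) * Complex.I * (ξ : ℂ)) * W ξ := by
        have h := congrFun hFd ξ
        rw [smul_eq_mul, ← hW] at h
        exact_mod_cast h
      have h2 : (c * ξ * x / ℏ : ℝ) = 2 * Real.pi * (ξ * x) := by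
        rw [hcdef]; field_simp
      have hIs : (-(Complex.I) * (ℏ : ℂ)) * (2 * (Real.pi : ℂ) * Complex.I * (ξ : ℂ)) =
          ((c * ξ : ℝ) : ℂ) := by
        rw [hcdef]; push_cast
        linear_combination (-(2 * (Real.pi : ℂ) * (ℏ : ℂ) * (ξ : ℂ))) * Complex.I_mul_I
      show E1 (c * ξ) * ((c * ξ : ℝ) : ℂ) * W ξ = _
      rw [show E1 (c * ξ) = Complex.exp (((2 * Real.pi * (ξ * x) : ℝ) : ℂ) * Complex.I) by
        simp only [hE1def]; rw [h2]]
      rw [h1, ← hIs]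
      ring
    have h𝓕int : Integrable (𝓕 ⇑Φd) := by
      exact (SchwartzMap.fourierTransformCLM ℝ Φd).integrable
    have hinv : 𝓕⁻ (𝓕 ⇑Φd) x = Φd x :=
      congrFun (Continuous.fourierInv_fourier_eq Φd.continuous Φd.integrable h𝓕int) x
    have hGint : (∫ ξ : ℝ, G ξ) = (-(Complex.I) * (ℏ : ℂ)) * Φd x := by
      simp only [hGval]
      rw [MeasureTheory.integral_const_mul]
      congr 1
      rw [← hinv, fourierInv_formula (𝓕 ⇑Φd) x]
    -- compute Φd x
    have h00 := BJaux.S_hasDerivAt hA' hgN x 0 x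
    have harg : ∀ τ : ℝ, τ * x + (1 - τ) * x = x := fun τ => by ring
    simp only [zero_add, pow_zero, one_mul, iteratedDeriv_zero, pow_one, iteratedDeriv_one,
      harg] at h00
    have hval : (∫ τ in (0:ℝ)..1, (1 - τ) * deriv A x) = deriv A x * (1 / 2) := by
      rw [intervalIntegral.integral_mul_const]
      have h12 : (∫ τ in (0:ℝ)..1, (1 - τ)) = 1 / 2 := by
        rw [intervalIntegral.integral_sub intervalIntegrable_const
          intervalIntegral.intervalIntegrable_id]
        simp
        norm_num
      rw [h12]; ring
    rw [hval] at h00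
    have hg0 : HasDerivAt g (deriv A x * (1 / 2)) x := h00
    have hψ' : HasDerivAt (fun y : ℝ => ψ y) (deriv (fun y : ℝ => ψ y) x) x :=
      ψ.differentiableAt.hasDerivAt
    have hφd : HasDerivAt (fun y : ℝ => (g y : ℂ) * ψ y)
        (((deriv A x * (1 / 2) : ℝ) : ℂ) * ψ x + (g x : ℂ) * deriv (fun y : ℝ => ψ y) x) x :=
      hg0.ofReal_comp.mul hψ'
    have hΦdx : Φd x = ((deriv A x * (1 / 2) : ℝ) : ℂ) * ψ x +
        (g x : ℂ) * deriv (fun y : ℝ => ψ y) x := by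
      rw [hΦddef, SchwartzMap.derivCLM_apply,
        show ⇑φ = fun y : ℝ => (g y : ℂ) * ψ y from funext hφ]
      exact hφd.deriv
    have hgx : g x = A x := by
      show (∫ τ in (0:ℝ)..1, A (τ * x + (1 - τ) * x)) = A x
      simp only [harg]
      simp
    have hAd : HasDerivAt A (deriv A x) x := ((hA.differentiable (by simp)) x).hasDerivAt
    have hRd : deriv (fun y : ℝ => (A y : ℂ) * ψ y) x =
        ((deriv A x : ℝ) : ℂ) * ψ x + (A x : ℂ) * deriv (fun y : ℝ => ψ y) x :=
      (hAd.ofReal_comp.mul hψ').deriv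
    rw [houter_eq, hGcomp, MeasureTheory.Measure.integral_comp_mul_left G c⁻¹, inv_inv,
      _root_.abs_of_pos hc0, hGint, hΦdx, hgx, hRd, Complex.real_smul, hcdef]
    have h2πℏ : (2 : ℂ) * (Real.pi : ℂ) * (ℏ : ℂ) ≠ 0 := by
      simp [hπ, hℏ', Real.pi_ne_zero]
    push_cast
    field_simp
    ring
end

section
/- Let ℏ > 0 and let ψ : ℝ → ℂ be twice continuously differentiable. Write x̂ for the operator of multiplication by x and p̂² for the operator φ ↦ −ℏ²·φ''. Then for every real x, the Weyl quantization of x²p² minus the Born–Jordan quantization of x²p², applied to ψ, equals (ℏ²/6)·ψ(x); explicitly: (1/4)·( x²·p̂²ψ(x) + 2x·(p̂²(x̂ψ))(x) + (p̂²(x̂²ψ))(x) ) − (1/3)·( x²·p̂²ψ(x) + x·(p̂²(x̂ψ))(x) + (p̂²(x̂²ψ))(x) ) = (ℏ²/6)·ψ(x). -/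
/-!
Weyl minus Born–Jordan for `x²p²` is `-(1/12)(x̂²p̂² - 2x̂p̂²x̂ + p̂²x̂²) = -(1/12)[x̂, [x̂, p̂²]]`,
and the double commutator is the constant `-2ℏ²`, because
`x²ψ'' - 2x(xψ)'' + (x²ψ)'' = 2ψ` for every twice differentiable `ψ`.
-/

section

variable {ψ : ℝ → ℂ} {ψ' : ℂ} {y : ℝ}

lemma hasDerivAt_ofReal (y : ℝ) : HasDerivAt (fun t : ℝ => (t : ℂ)) 1 y := by
  simpa using (hasDerivAt_id y).ofReal_comp

lemma HasDerivAt.ofReal_mul (h : HasDerivAt ψ ψ' y) :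
    HasDerivAt (fun t : ℝ => (t : ℂ) * ψ t) (ψ y + y * ψ') y :=
  ((hasDerivAt_ofReal y).mul h).congr_deriv (by ring)

lemma HasDerivAt.ofReal_sq_mul (h : HasDerivAt ψ ψ' y) :
    HasDerivAt (fun t : ℝ => (t : ℂ) ^ 2 * ψ t) (2 * y * ψ y + y ^ 2 * ψ') y :=
  (((hasDerivAt_ofReal y).pow 2).mul h).congr_deriv (by simp)

variable (hψ : Differentiable ℝ ψ) {x : ℝ} (hψ' : DifferentiableAt ℝ (deriv ψ) x)
include hψ hψ'

lemma deriv_deriv_ofReal_mul :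
    deriv (deriv fun t : ℝ => (t : ℂ) * ψ t) x = 2 * deriv ψ x + x * deriv (deriv ψ) x := by
  have hd : deriv (fun t : ℝ => (t : ℂ) * ψ t) = fun y => ψ y + y * deriv ψ y :=
    funext fun y => (hψ y).hasDerivAt.ofReal_mul.deriv
  rw [hd]
  exact ((hψ x).hasDerivAt.add hψ'.hasDerivAt.ofReal_mul).deriv.trans (by ring)

lemma deriv_deriv_ofReal_sq_mul :
    deriv (deriv fun t : ℝ => (t : ℂ) ^ 2 * ψ t) x
      = 2 * ψ x + 4 * x * deriv ψ x + x ^ 2 * deriv (deriv ψ) x := by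
  have hd : deriv (fun t : ℝ => (t : ℂ) ^ 2 * ψ t)
      = fun y => 2 * (y * ψ y) + y ^ 2 * deriv ψ y :=
    funext fun y => (hψ y).hasDerivAt.ofReal_sq_mul.deriv.trans (by ring)
  rw [hd]
  exact (((hψ x).hasDerivAt.ofReal_mul.const_mul 2).add
    hψ'.hasDerivAt.ofReal_sq_mul).deriv.trans (by ring)

lemma ofReal_sq_mul_deriv_deriv_sub_add :
    (x : ℂ) ^ 2 * deriv (deriv ψ) x - 2 * x * deriv (deriv fun t : ℝ => (t : ℂ) * ψ t) x
      + deriv (deriv fun t : ℝ => (t : ℂ) ^ 2 * ψ t) x = 2 * ψ x := by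
  rw [deriv_deriv_ofReal_mul hψ hψ', deriv_deriv_ofReal_sq_mul hψ hψ']
  ring

end

theorem weyl_minus_born_jordan_x2p2_general (ℏ : ℝ)
    (ψ : ℝ → ℂ) (hψ : ContDiff ℝ 2 ψ)
    (Psq : (ℝ → ℂ) → ℝ → ℂ)
    (hPsq : ∀ (φ : ℝ → ℂ) (y : ℝ), Psq φ y = -(ℏ : ℂ) ^ 2 * deriv (deriv φ) y)
    (x : ℝ) :
    (1 / 4) * ((x : ℂ) ^ 2 * Psq ψ x
        + 2 * (x : ℂ) * Psq (fun y : ℝ => (y : ℂ) * ψ y) x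
        + Psq (fun y : ℝ => (y : ℂ) ^ 2 * ψ y) x)
      - (1 / 3) * ((x : ℂ) ^ 2 * Psq ψ x
        + (x : ℂ) * Psq (fun y : ℝ => (y : ℂ) * ψ y) x
        + Psq (fun y : ℝ => (y : ℂ) ^ 2 * ψ y) x)
      = ((ℏ : ℂ) ^ 2 / 6) * ψ x := by
  have hcomm := ofReal_sq_mul_deriv_deriv_sub_add (hψ.differentiable two_ne_zero)
    (hψ.differentiable_deriv_two x)
  simp only [hPsq]
  linear_combination (ℏ : ℂ) ^ 2 / 12 * hcomm

theorem weyl_minus_born_jordan_x2p2 (ℏ : ℝ) (hℏ : 0 < ℏ)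
    (ψ : ℝ → ℂ) (hψ : ContDiff ℝ 2 ψ)
    (Psq : (ℝ → ℂ) → ℝ → ℂ)
    (hPsq : ∀ (φ : ℝ → ℂ) (y : ℝ), Psq φ y = -(ℏ : ℂ) ^ 2 * deriv (deriv φ) y)
    (x : ℝ) :
    (1 / 4) * ((x : ℂ) ^ 2 * Psq ψ x
        + 2 * (x : ℂ) * Psq (fun y : ℝ => (y : ℂ) * ψ y) x
        + Psq (fun y : ℝ => (y : ℂ) ^ 2 * ψ y) x)
      - (1 / 3) * ((x : ℂ) ^ 2 * Psq ψ x
        + (x : ℂ) * Psq (fun y : ℝ => (y : ℂ) * ψ y) x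
        + Psq (fun y : ℝ => (y : ℂ) ^ 2 * ψ y) x)
      = ((ℏ : ℂ) ^ 2 / 6) * ψ x :=
  weyl_minus_born_jordan_x2p2_general ℏ ψ hψ Psq hPsq x
end
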